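/- arXiv:2304.11971 — 2 statements merged into one kernel-verified Lean document; each statement's English description precedes it below -/
import Mathlib

section
/- Let G be a finite graph on n vertices and t ≤ n/3. If every connected component of G has at most n−t vertices, then there exists a set X ⊆ V with t ≤ |X| ≤ n/2 such that no edge of G connects X to V∖X (i.e., X is a union of connected components). -/
/-!
Among the unions of connected components with at least `t` vertices, take one, `X`, of least
size. Removing from `X` the component `C` of any of its vertices leaves a smaller union of
components, so `|X| < t + |C|`; and if `|C| ≥ t` then minimality gives `|X| ≤ |C|`. Either way
`|X| ≤ max (n - t) (2t - 1) = n - t`. So if `X` has more than `n / 2` vertices, its complement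
is a union of components with between `t` and `n / 2` vertices.
-/

open Finset
open scoped Classical

namespace SimpleGraph

variable {V : Type*} (G : SimpleGraph V)

/-- `s` is a union of connected components of `G`. -/
def ReachableClosed (s : Finset V) : Prop :=
  ∀ ⦃u v⦄, u ∈ s → G.Reachable u v → v ∈ s

variable {G} {s s' : Finset V}

theorem reachableClosed_univ [Fintype V] : G.ReachableClosed univ :=
  fun _ v _ _ ↦ mem_univ v

namespace ReachableClosed

theorem not_adj (hs : G.ReachableClosed s) {u v : V} (hu : u ∈ s) (hv : v ∉ s) :
    ¬ G.Adj u v :=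
  fun h ↦ hv (hs hu h.reachable)

theorem sdiff [DecidableEq V] (hs : G.ReachableClosed s) (hs' : G.ReachableClosed s') :
    G.ReachableClosed (s \ s') := by
  intro u v hu huv
  rw [mem_sdiff] at hu ⊢
  exact ⟨hs hu.1 huv, fun hv ↦ hu.2 (hs' hv huv.symm)⟩

theorem compl [Fintype V] [DecidableEq V] (hs : G.ReachableClosed s) :
    G.ReachableClosed sᶜ := by
  intro u v hu huv
  rw [mem_compl] at hu ⊢
  exact fun hv ↦ hu (hs hv huv.symm)

end ReachableClosed

section Components

variable [Fintype V] [DecidableEq V] [DecidableRel G.Adj]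

theorem reachableClosed_filter_reachable (v : V) :
    G.ReachableClosed (univ.filter (G.Reachable v)) := by
  intro u w hu huw
  rw [mem_filter] at hu ⊢
  exact ⟨mem_univ w, hu.2.trans huw⟩

theorem ReachableClosed.filter_reachable_subset (hs : G.ReachableClosed s) {v : V} (hv : v ∈ s) :
    univ.filter (G.Reachable v) ⊆ s :=
  fun _ hu ↦ hs hv (mem_filter.mp hu).2

theorem ReachableClosed.card_le_of_minimal {X : Finset V} {t m : ℕ}
    (hX : G.ReachableClosed X)
    (hmin : ∀ Y, G.ReachableClosed Y → t ≤ #Y → #X ≤ #Y)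
    (hcomp : ∀ v, #(univ.filter (G.Reachable v)) ≤ m) (htm : 2 * t ≤ m) :
    #X ≤ m := by
  obtain rfl | ⟨v, hv⟩ := X.eq_empty_or_nonempty
  · simp
  set C := univ.filter (G.Reachable v)
  have hC : G.ReachableClosed C := reachableClosed_filter_reachable v
  have hvC : v ∈ C := mem_filter.mpr ⟨mem_univ v, Reachable.refl v⟩
  have hrest : #(X \ C) < t := by
    by_contra! h
    have hle : #X ≤ #(X \ C) := hmin _ (hX.sdiff hC) h
    have hlt : #(X \ C) < #X :=
      card_lt_card (sdiff_ssubset (hX.filter_reachable_subset hv) ⟨v, hvC⟩)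
    omega
  have hsplit : #X ≤ #(X \ C) + #C := card_le_card_sdiff_add_card
  by_cases hCt : t ≤ #C
  · exact (hmin C hC hCt).trans (hcomp v)
  · omega

end Components

end SimpleGraph

open SimpleGraph in
theorem stmt_2_general {V : Type*} [Fintype V] [DecidableEq V] (G : SimpleGraph V)
    [DecidableRel G.Adj] (n t : ℕ) (hn : Fintype.card V = n)
    (ht3 : 3 * t ≤ n)
    (hcomp : ∀ v : V,
      (Finset.univ.filter (fun u => G.Reachable v u)).card ≤ n - t) :
    ∃ X : Finset V, t ≤ X.card ∧ 2 * X.card ≤ n ∧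
      ∀ u ∈ X, ∀ v, v ∉ X → ¬ G.Adj u v := by
  have hcard_univ : #(univ : Finset V) = n := by rw [card_univ, hn]
  obtain ⟨X, hX, hmin⟩ := exists_min_image
    (univ.filter fun X : Finset V ↦ G.ReachableClosed X ∧ t ≤ #X) card
    ⟨univ, mem_filter.mpr ⟨mem_univ _, reachableClosed_univ, by omega⟩⟩
  simp only [mem_filter, mem_univ, true_and] at hX hmin
  by_cases hhalf : 2 * #X ≤ n
  · exact ⟨X, hX.2, hhalf, fun u hu v hv ↦ hX.1.not_adj hu hv⟩
  · have hXle : #X ≤ n - t :=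
      hX.1.card_le_of_minimal (fun Y hY hYt ↦ hmin Y ⟨hY, hYt⟩) hcomp (by omega)
    have hcompl : #Xᶜ = n - #X := by rw [card_compl, hn]
    exact ⟨Xᶜ, by omega, by omega, fun u hu v hv ↦ hX.1.compl.not_adj hu hv⟩

theorem stmt_2 {V : Type*} [Fintype V] [DecidableEq V] (G : SimpleGraph V)
    [DecidableRel G.Adj] (n t : ℕ) (hn : Fintype.card V = n)
    (ht : 1 ≤ t) (ht3 : 3 * t ≤ n)
    (hcomp : ∀ v : V,
      (Finset.univ.filter (fun u => G.Reachable v u)).card ≤ n - t) :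
    ∃ X : Finset V, t ≤ X.card ∧ 2 * X.card ≤ n ∧
      ∀ u ∈ X, ∀ v, v ∉ X → ¬ G.Adj u v :=
  stmt_2_general G n t hn ht3 hcomp
end

section
/- Let H be a graph with N = 2m+1 vertices such that for every subset X ⊆ V(H) with |X| = m, the number of edges between X and V(H)∖X is at least a·m (for a real a > 0). Then the number of edges of H is at least a·(2m+1)·m/(m+1), and hence the average degree of H is at least 2a·m/(m+1) = 2a·(N−1)/(N+1). -/
/-!
Sum the cut condition over all `m`-subsets `X`. An ordered pair `(u, v)` of adjacent vertices
is counted by exactly the `C(2m-1, m-1)` sets with `u ∈ X`, `v ∉ X`, so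
`C(2m+1, m) · a m ≤ C(2m-1, m-1) · 2|E|`, and `C(2m+1, m) · m (m+1) = (2m+1) 2m · C(2m-1, m-1)`.
-/

open Finset Nat

theorem Nat.add_add_two_choose_succ_mul (k l : ℕ) :
    (k + l + 2).choose (k + 1) * ((k + 1) * (l + 1)) =
      (k + l + 2) * (k + l + 1) * (k + l).choose k := by
  apply Nat.eq_of_mul_eq_mul_right (mul_pos (factorial_pos l) (factorial_pos k))
  calc _ = (l + 1 + (k + 1)).choose (k + 1) * (l + 1)! * (k + 1)! := by
        simp only [factorial_succ]; ring_nf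
    _ = (k + l + 1 + 1)! := by rw [add_choose_mul_factorial_mul_factorial]; ring_nf
    _ = (k + l + 2) * (k + l + 1) * ((k + l).choose k * l ! * k !) := by
        rw [factorial_succ, factorial_succ, add_comm k l, add_choose_mul_factorial_mul_factorial]
        ring
    _ = _ := by ring

section DoubleCounting

variable {α : Type*} [Fintype α] [DecidableEq α]

theorem card_filter_mem_notMem_powersetCard_succ {u v : α} (huv : u ≠ v) (k : ℕ) :
    #{X ∈ powersetCard (k + 1) (univ : Finset α) | u ∈ X ∧ v ∉ X} =
      (Fintype.card α - 2).choose k := by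
  have hrest : #((univ.erase u).erase v) = Fintype.card α - 2 := by
    rw [card_erase_of_mem (by simpa using huv.symm), card_erase_of_mem (mem_univ u),
      Finset.card_univ]
    omega
  rw [← hrest, ← card_powersetCard]
  refine card_nbij' (·.erase u) (insert u) ?_ ?_ ?_ ?_ <;> intro X hX <;>
    simp only [coe_filter, mem_powersetCard, Set.mem_ofPred_eq, mem_coe] at hX ⊢
  · grind
  · grind
  · exact insert_erase hX.2.1
  · exact erase_insert fun h => by simpa using hX.1 h

theorem sum_sum_sum_compl_eq_sum_sum_card_smul {M : Type*} [AddCommMonoid M]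
    (S : Finset (Finset α)) (f : α → α → M) :
    ∑ X ∈ S, ∑ u ∈ X, ∑ v ∈ Xᶜ, f u v = ∑ u, ∑ v, #{X ∈ S | u ∈ X ∧ v ∉ X} • f u v := by
  calc ∑ X ∈ S, ∑ u ∈ X, ∑ v ∈ Xᶜ, f u v
      = ∑ X ∈ S, ∑ u, ∑ v, if u ∈ X ∧ v ∉ X then f u v else 0 := by
        refine sum_congr rfl fun X _ => ?_
        simp only [ite_and, ← mem_compl, ← ite_sum_zero, sum_ite_mem, univ_inter]
    _ = ∑ u, ∑ v, ∑ X ∈ S, if u ∈ X ∧ v ∉ X then f u v else 0 := by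
        rw [sum_comm]; exact sum_congr rfl fun u _ => sum_comm
    _ = _ := by simp only [← sum_filter, sum_const]

end DoubleCounting

theorem SimpleGraph.sum_powersetCard_succ_cut {V : Type*} [Fintype V] [DecidableEq V]
    {R : Type*} [Semiring R] (G : SimpleGraph V) [DecidableRel G.Adj] (k : ℕ) :
    ∑ X ∈ powersetCard (k + 1) (univ : Finset V), ∑ u ∈ X, ∑ v ∈ Xᶜ,
        (if G.Adj u v then (1 : R) else 0) =
      ((Fintype.card V - 2).choose k * (2 * #G.edgeFinset) : ℕ) := by
  have hpair : ∀ u v : V, #{X ∈ powersetCard (k + 1) univ | u ∈ X ∧ v ∉ X} •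
      (if G.Adj u v then (1 : R) else 0) =
        (Fintype.card V - 2).choose k • (if G.Adj u v then (1 : R) else 0) := by
    intro u v
    by_cases huv : u = v
    · simp [huv]
    · rw [card_filter_mem_notMem_powersetCard_succ huv]
  have hdeg : ∀ u : V, ∑ v, (if G.Adj u v then (1 : R) else 0) = G.degree u := by
    intro u
    rw [sum_boole, ← G.card_neighborFinset_eq_degree, G.neighborFinset_eq_filter]
  simp only [sum_sum_sum_compl_eq_sum_sum_card_smul, hpair, ← smul_sum, hdeg]
  rw [← Nat.cast_sum, G.sum_degrees_eq_twice_card_edges, nsmul_eq_mul, ← Nat.cast_mul]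

theorem SimpleGraph.choose_mul_le_of_le_cut {V : Type*} [Fintype V] [DecidableEq V]
    {R : Type*} [Semiring R] [PartialOrder R] [IsOrderedAddMonoid R] (G : SimpleGraph V)
    [DecidableRel G.Adj] (k : ℕ) (c : R)
    (hc : ∀ X : Finset V, #X = k + 1 → c ≤ ∑ u ∈ X, ∑ v ∈ Xᶜ, if G.Adj u v then (1 : R) else 0) :
    (Fintype.card V).choose (k + 1) * c ≤
      ((Fintype.card V - 2).choose k * (2 * #G.edgeFinset) : ℕ) := by
  calc _ = ∑ X ∈ powersetCard (k + 1) (univ : Finset V), c := by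
        rw [sum_const, card_powersetCard, Finset.card_univ, nsmul_eq_mul]
    _ ≤ _ := sum_le_sum fun X hX => hc X (mem_powersetCard.mp hX).2
    _ = _ := G.sum_powersetCard_succ_cut k

theorem stmt_3_general {V : Type*} [Fintype V] [DecidableEq V] (H : SimpleGraph V)
    [DecidableRel H.Adj] (m : ℕ) (hm : 1 ≤ m) (hcard : Fintype.card V = 2 * m + 1)
    (a : ℝ)
    (hexp : ∀ X : Finset V, X.card = m →
      a * m ≤ (∑ u ∈ X, ∑ v ∈ Xᶜ, if H.Adj u v then (1:ℝ) else 0)) :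
    a * (2 * m + 1) * m / (m + 1) ≤ (H.edgeFinset.card : ℝ) ∧
    2 * a * m / (m + 1) ≤ (∑ v : V, (H.degree v : ℝ)) / (2 * m + 1) := by
  obtain ⟨k, rfl⟩ : ∃ k, m = k + 1 := ⟨m - 1, by omega⟩
  have hsum := H.choose_mul_le_of_le_cut k _ hexp
  have hbinom := Nat.add_add_two_choose_succ_mul k (k + 1)
  rw [hcard, show 2 * (k + 1) + 1 - 2 = k + (k + 1) by omega] at hsum
  rw [show k + (k + 1) + 2 = 2 * (k + 1) + 1 by ring] at hbinom
  have hedges : a * (2 * (k + 1 : ℕ) + 1) * (k + 1 : ℕ) ≤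
      (#H.edgeFinset : ℝ) * ((k + 1 : ℕ) + 1) := by
    have hbinom' := congrArg (Nat.cast : ℕ → ℝ) hbinom
    have hchoose : (0 : ℝ) < (k + (k + 1)).choose k := by exact_mod_cast Nat.choose_pos (by omega)
    push_cast at hsum hbinom' ⊢
    refine le_of_mul_le_mul_left ?_ (by positivity : (0 : ℝ) < 2 * (k + 1) * (k + (k + 1)).choose k)
    linear_combination (k + 1 : ℝ) * (k + 2) * hsum - a * (k + 1) * hbinom'
  have hdeg : ∑ v, (H.degree v : ℝ) = 2 * #H.edgeFinset := by
    exact_mod_cast H.sum_degrees_eq_twice_card_edges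
  constructor
  · rw [div_le_iff₀ (by positivity)]
    linarith
  · rw [hdeg, div_le_div_iff₀ (by positivity) (by positivity)]
    linarith

theorem stmt_3 {V : Type*} [Fintype V] [DecidableEq V] (H : SimpleGraph V)
    [DecidableRel H.Adj] (m : ℕ) (hm : 1 ≤ m) (hcard : Fintype.card V = 2 * m + 1)
    (a : ℝ) (ha : 0 < a)
    (hexp : ∀ X : Finset V, X.card = m →
      a * m ≤ (∑ u ∈ X, ∑ v ∈ Xᶜ, if H.Adj u v then (1:ℝ) else 0)) :
    a * (2 * m + 1) * m / (m + 1) ≤ (H.edgeFinset.card : ℝ) ∧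
    2 * a * m / (m + 1) ≤ (∑ v : V, (H.degree v : ℝ)) / (2 * m + 1) :=
  stmt_3_general H m hm hcard a hexp
end
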